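/- arXiv:2604.09460 — 3 statements merged into one kernel-verified Lean document; each statement's English description precedes it below -/
import Mathlib

section
/- If Y ⊆ X is compact (in the product topology), then Ψ(Y) is compact. -/
/-! Each condition "some member `i ∈ C` is deterred by a punishment path in `Y`" defines the
projection to `X` of a closed subset of `X × Y`, closed because `U_i` and the splice are
continuous; projecting along the compact factor `Y` keeps it closed. So `Ψ(Y)` is an intersection
of finite unions of closed sets, and a closed subset of the compact space `X`. -/

open Set

section Setup

variable {N : Type*} [Fintype N] [DecidableEq N] {Z : N → Type*}

/-- A stage-game action profile. -/
abbrev Profile (Z : N → Type*) := ∀ i, Z i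

/-- An infinite path of action profiles. -/
abbrev RPath (Z : N → Type*) := ℕ → Profile Z

/-- The profile played in period `τ` when coalition `C` deviates to `ζ` (off `C`, players follow `x τ`). -/
def devProfile (x : RPath Z) (C : Finset N) (τ : ℕ) (ζ : Profile Z) : Profile Z :=
  fun i => if i ∈ C then ζ i else x τ i

/-- The spliced path `(x; ζ^C_τ; y)`: follow `x` before period `τ`, play the deviation profile at `τ`,
and follow `y` afterwards.  Periods are indexed from `0`. -/
def splice (x : RPath Z) (C : Finset N) (τ : ℕ) (ζ : Profile Z) (y : RPath Z) : RPath Z :=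
  fun t => if t < τ then x t else if t = τ then devProfile x C τ ζ else y (t - τ - 1)

/-- Discounted payoff `U_i(x) = (1-δ) ∑ δ^t u_i(x_t)`. -/
noncomputable def disc (u : N → Profile Z → ℝ) (δ : ℝ) (i : N) (x : RPath Z) : ℝ :=
  (1 - δ) * ∑' t : ℕ, δ ^ t * u i (x t)

/-- The coalitional enforceability operator `Ψ`. -/
def Psi (u : N → Profile Z → ℝ) (δ : ℝ) (Y : Set (RPath Z)) : Set (RPath Z) :=
  {x | ∀ C : Finset N, C.Nonempty → ∀ τ : ℕ, ∀ ζ : Profile Z,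
    ∃ p : N → RPath Z, (∀ i, p i ∈ Y) ∧
      ∃ i ∈ C, disc u δ i x ≥ disc u δ i (splice x C τ ζ (p i))}

/-- A history (position) is a finite list of past action profiles. -/
abbrev Hist (Z : N → Type*) := List (Profile Z)

/-- The history reached after `n` periods of following plan `f` from history `h`. -/
def planHist (f : Hist Z → Profile Z) (h : Hist Z) : ℕ → Hist Z
  | 0 => h
  | n + 1 => planHist f h n ++ [f (planHist f h n)]

/-- The continuation path prescribed by plan `f` after history `h`. -/
def planPath (f : Hist Z → Profile Z) (h : Hist Z) : RPath Z :=
  fun n => f (planHist f h n)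

/-- The position induced from `G` when coalition `C` deviates from path `x` in period `τ` via `ζ`. -/
def devHistory (G : Hist Z) (x : RPath Z) (C : Finset N) (τ : ℕ) (ζ : Profile Z) : Hist Z :=
  G ++ (List.ofFn fun t : Fin τ => x t) ++ [devProfile x C τ ζ]

/-- A Perfect Coalitional Equilibrium: after every history, every one-shot coalitional deviation
leaves some member of the deviating coalition no better off, given the plan's continuation. -/
def IsPCE (u : N → Profile Z → ℝ) (δ : ℝ) (f : Hist Z → Profile Z) : Prop :=
  ∀ h : Hist Z, ∀ C : Finset N, C.Nonempty → ∀ τ : ℕ, ∀ ζ : Profile Z,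
    ∃ i ∈ C, disc u δ i (planPath f h) ≥
      disc u δ i (splice (planPath f h) C τ ζ (planPath f (devHistory h (planPath f h) C τ ζ)))

/-- The set of Perfect Coalitional Equilibrium paths. -/
def PCEP (u : N → Profile Z → ℝ) (δ : ℝ) : Set (RPath Z) :=
  {x | ∃ f : Hist Z → Profile Z, IsPCE u δ f ∧ planPath f [] = x}

/-- Payoff at position `G`: `u_i(G)(x) = a_i(G) + δ^{|G|} U_i(x)`. -/
noncomputable def posPayoff (u : N → Profile Z → ℝ) (δ : ℝ) (i : N) (G : Hist Z)
    (x : RPath Z) : ℝ :=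
  (1 - δ) * (∑ t : Fin G.length, δ ^ (t : ℕ) * u i (G.get t)) + δ ^ G.length * disc u δ i x

/-- The conservative dominion of position `G` relative to the standard of behavior `σ`. -/
def CDOM (u : N → Profile Z → ℝ) (δ : ℝ) (σ : Hist Z → Set (RPath Z)) (G : Hist Z) :
    Set (RPath Z) :=
  {x | ∃ C : Finset N, C.Nonempty ∧ ∃ τ : ℕ, ∃ ζ : Profile Z,
    (σ (devHistory G x C τ ζ)).Nonempty ∧
    ∀ y ∈ σ (devHistory G x C τ ζ), ∀ i ∈ C,
      posPayoff u δ i (devHistory G x C τ ζ) y > posPayoff u δ i G x}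

/-- A standard of behavior is nondiscriminating if it assigns the same set to every position. -/
def Nondiscriminating (σ : Hist Z → Set (RPath Z)) : Prop := ∀ G H, σ G = σ H

/-- Conservative internal stability. -/
def ConsInternallyStable (u : N → Profile Z → ℝ) (δ : ℝ) (σ : Hist Z → Set (RPath Z)) : Prop :=
  ∀ G, σ G ∩ CDOM u δ σ G = ∅

/-- Conservative external stability. -/
def ConsExternallyStable (u : N → Profile Z → ℝ) (δ : ℝ) (σ : Hist Z → Set (RPath Z)) : Prop :=
  ∀ G, (σ G)ᶜ ⊆ CDOM u δ σ G

end Setup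

theorem IsClosed.isClosed_setOf_exists_mem {X Y : Type*} [TopologicalSpace X] [TopologicalSpace Y]
    {s : Set (X × Y)} (hs : IsClosed s) {K : Set Y} (hK : IsCompact K) :
    IsClosed {x | ∃ y ∈ K, (x, y) ∈ s} := by
  have : CompactSpace K := isCompact_iff_compactSpace.mp hK
  have hproj : {x | ∃ y ∈ K, (x, y) ∈ s} = Prod.fst '' (Prod.map id (↑) ⁻¹' s : Set (X × K)) := by
    ext x
    simp
  rw [hproj]
  exact isClosedMap_fst_of_compactSpace _ (hs.preimage (by fun_prop))

section Enforceability

variable {N : Type*} {Z : N → Type*}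

theorem continuous_disc [∀ i, TopologicalSpace (Z i)] [∀ i, CompactSpace (Z i)]
    {u : N → Profile Z → ℝ} {δ : ℝ} {i : N} (hu : Continuous (u i)) (hδ0 : 0 ≤ δ) (hδ1 : δ < 1) :
    Continuous (disc u δ i) := by
  obtain ⟨M, hM⟩ : ∃ M, ∀ z : Profile Z, ‖u i z‖ ≤ M := by
    obtain ⟨M, hM⟩ := isCompact_univ.exists_bound_of_continuousOn hu.norm.continuousOn
    exact ⟨M, fun z => by simpa using hM z (mem_univ z)⟩
  refine continuous_const.mul (continuous_tsum (u := fun t => δ ^ t * M) (fun t => by fun_prop)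
    ((summable_geometric_of_lt_one hδ0 hδ1).mul_right M) fun t x => ?_)
  rw [norm_mul, Real.norm_of_nonneg (pow_nonneg hδ0 t)]
  exact mul_le_mul_of_nonneg_left (hM _) (pow_nonneg hδ0 t)

variable [DecidableEq N]

theorem continuous_splice [∀ i, TopologicalSpace (Z i)] (C : Finset N) (τ : ℕ) (ζ : Profile Z) :
    Continuous fun p : RPath Z × RPath Z => splice p.1 C τ ζ p.2 := by
  refine continuous_pi fun t => ?_
  unfold splice devProfile
  split_ifs
  · fun_prop
  · exact continuous_pi fun i => by split_ifs <;> fun_prop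
  · fun_prop

def deterred (u : N → Profile Z → ℝ) (δ : ℝ) (Y : Set (RPath Z)) (C : Finset N) (τ : ℕ)
    (ζ : Profile Z) (i : N) : Set (RPath Z) :=
  {x | ∃ y ∈ Y, disc u δ i x ≥ disc u δ i (splice x C τ ζ y)}

-- Player `i` only looks at their own punishment path `p i`, so `p` may be taken constant.
theorem psi_eq_iInter_iUnion_deterred (u : N → Profile Z → ℝ) (δ : ℝ) (Y : Set (RPath Z)) :
    Psi u δ Y = ⋂ (C : Finset N) (_ : C.Nonempty) (τ : ℕ) (ζ : Profile Z),
      ⋃ i ∈ C, deterred u δ Y C τ ζ i := by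
  ext x
  simp only [Psi, deterred, mem_ofPred_eq, mem_iInter, mem_iUnion, exists_prop]
  refine forall₄_congr fun C _ τ ζ => ⟨?_, ?_⟩
  · rintro ⟨p, hpY, i, hiC, hdet⟩
    exact ⟨i, hiC, p i, hpY i, hdet⟩
  · rintro ⟨i, hiC, y, hyY, hdet⟩
    exact ⟨fun _ => y, fun _ => hyY, i, hiC, hdet⟩

variable [∀ i, TopologicalSpace (Z i)] [∀ i, CompactSpace (Z i)]
  {u : N → Profile Z → ℝ} {δ : ℝ} {Y : Set (RPath Z)}

theorem isClosed_deterred (hu : ∀ i, Continuous (u i)) (hδ0 : 0 ≤ δ) (hδ1 : δ < 1)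
    (hY : IsCompact Y) (C : Finset N) (τ : ℕ) (ζ : Profile Z) (i : N) :
    IsClosed (deterred u δ Y C τ ζ i) :=
  have hdisc := continuous_disc (hu i) hδ0 hδ1
  (isClosed_le (hdisc.comp (continuous_splice C τ ζ)) (hdisc.comp continuous_fst)
    ).isClosed_setOf_exists_mem hY

theorem isClosed_psi (hu : ∀ i, Continuous (u i)) (hδ0 : 0 ≤ δ) (hδ1 : δ < 1)
    (hY : IsCompact Y) : IsClosed (Psi u δ Y) := by
  rw [psi_eq_iInter_iUnion_deterred]
  exact isClosed_iInter fun C => isClosed_iInter fun _ => isClosed_iInter fun τ =>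
    isClosed_iInter fun ζ => C.finite_toSet.isClosed_biUnion fun i _ =>
      isClosed_deterred hu hδ0 hδ1 hY C τ ζ i

end Enforceability

theorem psi_compact_general {N : Type*} [DecidableEq N] {Z : N → Type*}
    [∀ i, MetricSpace (Z i)] [∀ i, CompactSpace (Z i)]
    (u : N → Profile Z → ℝ) (δ : ℝ)
    (hu : ∀ i, Continuous (u i)) (hδ0 : 0 < δ) (hδ1 : δ < 1)
    {Y : Set (RPath Z)} (hY : IsCompact Y) :
    IsCompact (Psi u δ Y) :=
  (isClosed_psi hu hδ0.le hδ1 hY).isCompact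

theorem psi_compact {N : Type*} [Fintype N] [DecidableEq N] {Z : N → Type*}
    [∀ i, MetricSpace (Z i)] [∀ i, CompactSpace (Z i)] [∀ i, Nonempty (Z i)]
    (u : N → Profile Z → ℝ) (δ : ℝ)
    (hu : ∀ i, Continuous (u i)) (hδ0 : 0 < δ) (hδ1 : δ < 1)
    {Y : Set (RPath Z)} (hY : IsCompact Y) :
    IsCompact (Psi u δ Y) :=
  psi_compact_general u δ hu hδ0 hδ1 hY
end

section
/- If Y ⊆ X satisfies Y ⊆ Ψ(Y) (self-generation), then every path in Y is the equilibrium path of a Perfect Coalitional Equilibrium; that is, Y ⊆ PCEP. -/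
open Set

/-!
Play the given path `x ∈ Y` as long as nobody deviates. After a deviation from the current
path `y ∈ Y` in period `k`, the plan cannot see which coalition deviated, only the profile
`a` that was played; it blames the coalition `D` of players whose action differs from `y k`,
which is nonempty and contained in every coalition that could have produced `a`. Self-generation
supplies a punishment path in `Y` that leaves some member of `D` no better off than `y`, and
the plan restarts on it. Comparing continuation payoffs after a history amounts to comparing
payoffs of paths in `Y` that share their first `k` periods, and this common prefix cancels.
-/

section SelfGeneration

variable {N : Type*} {Z : N → Type*}

section Discounting

variable (u : N → Profile Z → ℝ) {δ : ℝ} {i : N} {M : ℝ}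

lemma summable_pow_mul_of_abs_le (hδ0 : 0 ≤ δ) (hδ1 : δ < 1) (hM : ∀ p, |u i p| ≤ M)
    (x : RPath Z) : Summable fun t => δ ^ t * u i (x t) := by
  refine .of_norm_bounded ((summable_geometric_of_lt_one hδ0 hδ1).mul_right M) fun t => ?_
  rw [Real.norm_eq_abs, abs_mul, abs_pow, abs_of_nonneg hδ0]
  exact mul_le_mul_of_nonneg_left (hM _) (pow_nonneg hδ0 t)

lemma disc_eq_sum_add_pow_mul_disc (hδ0 : 0 ≤ δ) (hδ1 : δ < 1) (hM : ∀ p, |u i p| ≤ M)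
    {w z : RPath Z} (k : ℕ) (hwz : ∀ t, w (k + t) = z t) :
    disc u δ i w = (1 - δ) * ∑ t ∈ Finset.range k, δ ^ t * u i (w t) + δ ^ k * disc u δ i z := by
  have hshift (t : ℕ) : δ ^ (t + k) * u i (w (t + k)) = δ ^ k * (δ ^ t * u i (z t)) := by
    rw [add_comm t k, hwz, pow_add]
    ring
  rw [disc, ← (summable_pow_mul_of_abs_le u hδ0 hδ1 hM w).sum_add_tsum_nat_add k,
    tsum_congr hshift, tsum_mul_left, disc]
  ring

lemma disc_le_disc_of_common_prefix (hδ0 : 0 < δ) (hδ1 : δ < 1) (hM : ∀ p, |u i p| ≤ M)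
    {w w' z z' : RPath Z} (k : ℕ) (hpre : ∀ t < k, w' t = w t)
    (hz : ∀ t, w (k + t) = z t) (hz' : ∀ t, w' (k + t) = z' t)
    (hle : disc u δ i w' ≤ disc u δ i w) : disc u δ i z' ≤ disc u δ i z := by
  rw [disc_eq_sum_add_pow_mul_disc u hδ0.le hδ1 hM k hz,
    disc_eq_sum_add_pow_mul_disc u hδ0.le hδ1 hM k hz',
    Finset.sum_congr rfl fun t ht => by rw [hpre t (Finset.mem_range.1 ht)]] at hle
  exact le_of_mul_le_mul_left (by linarith) (pow_pos hδ0 k)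

end Discounting

lemma planHist_eq_append_ofFn (f : Hist Z → Profile Z) (h : Hist Z) (n : ℕ) :
    planHist f h n = h ++ List.ofFn fun t : Fin n => planPath f h t := by
  induction n with
  | zero => simp [planHist]
  | succ n ih =>
    rw [planHist, ih, List.ofFn_succ_last]
    simp [planPath, ih]

section Deviators

variable [Fintype N]

open scoped Classical in
noncomputable def deviators (b a : Profile Z) : Finset N :=
  Finset.univ.filter fun i => a i ≠ b i

lemma mem_deviators {b a : Profile Z} {i : N} : i ∈ deviators b a ↔ a i ≠ b i := by
  simp [deviators]

lemma deviators_nonempty {b a : Profile Z} (h : a ≠ b) : (deviators b a).Nonempty := by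
  obtain ⟨i, hi⟩ := Function.ne_iff.1 h
  exact ⟨i, mem_deviators.2 hi⟩

variable [DecidableEq N]

lemma devProfile_deviators (x : RPath Z) (τ : ℕ) (a : Profile Z) :
    devProfile x (deviators (x τ) a) τ a = a := by
  funext i
  by_cases hi : i ∈ deviators (x τ) a
  · simp [devProfile, hi]
  · simpa [devProfile, hi] using (not_not.1 (mt mem_deviators.2 hi)).symm

lemma deviators_devProfile_subset (x : RPath Z) (C : Finset N) (τ : ℕ) (ζ : Profile Z) :
    deviators (x τ) (devProfile x C τ ζ) ⊆ C := fun i hi => by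
  by_contra hiC
  exact mem_deviators.1 hi (by simp [devProfile, hiC])

end Deviators

section Deviations

variable [DecidableEq N]

lemma splice_eq_self_of_devProfile_eq {x : RPath Z} {C : Finset N} {τ : ℕ} {ζ : Profile Z}
    {y : RPath Z} (h : devProfile x C τ ζ = x τ) (hy : ∀ n, y n = x (τ + 1 + n)) :
    splice x C τ ζ y = x := by
  funext t
  rcases lt_trichotomy t τ with ht | rfl | ht
  · simp [splice, ht]
  · simp [splice, h]
  · simp only [splice, if_neg (show ¬t < τ by omega), if_neg (show t ≠ τ by omega), hy]
    congr 1
    omega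

lemma splice_add_of_devProfile_eq {y q : RPath Z} {C D : Finset N} {k τ : ℕ} {ζ ζ' : Profile Z}
    (h : devProfile y D (k + τ) ζ' = devProfile (fun t => y (k + t)) C τ ζ) (t : ℕ) :
    splice y D (k + τ) ζ' q (k + t) = splice (fun t => y (k + t)) C τ ζ q t := by
  rcases lt_trichotomy t τ with ht | rfl | ht
  · simp [splice, ht]
  · simp [splice, h]
  · simp only [splice, if_neg (show ¬k + t < k + τ by omega), if_neg (show k + t ≠ k + τ by omega),
      if_neg (show ¬t < τ by omega), if_neg (show t ≠ τ by omega)]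
    congr 1
    omega

lemma devHistory_planPath (f : Hist Z → Profile Z) (h : Hist Z) (C : Finset N) (τ : ℕ)
    (ζ : Profile Z) :
    devHistory h (planPath f h) C τ ζ = planHist f h τ ++ [devProfile (planPath f h) C τ ζ] := by
  rw [devHistory, planHist_eq_append_ofFn]

def IsPunishmentRule (u : N → Profile Z → ℝ) (δ : ℝ) (Y : Set (RPath Z))
    (pun : RPath Z → Finset N → ℕ → Profile Z → RPath Z) : Prop :=
  ∀ y ∈ Y, ∀ C : Finset N, C.Nonempty → ∀ τ ζ, pun y C τ ζ ∈ Y ∧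
    ∃ i ∈ C, disc u δ i (splice y C τ ζ (pun y C τ ζ)) ≤ disc u δ i y

lemma exists_isPunishmentRule {u : N → Profile Z → ℝ} {δ : ℝ} {Y : Set (RPath Z)}
    (hself : Y ⊆ Psi u δ Y) : ∃ pun, IsPunishmentRule u δ Y pun := by
  have hpun (y : RPath Z) (C : Finset N) (τ : ℕ) (ζ : Profile Z) : ∃ q, y ∈ Y → C.Nonempty →
      q ∈ Y ∧ ∃ i ∈ C, disc u δ i (splice y C τ ζ q) ≤ disc u δ i y := by
    by_cases h : y ∈ Y ∧ C.Nonempty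
    · obtain ⟨p, hpY, i, hiC, hi⟩ := hself h.1 C h.2 τ ζ
      exact ⟨p i, fun _ _ => ⟨hpY i, i, hiC, hi⟩⟩
    · exact ⟨y, fun hy hC => absurd ⟨hy, hC⟩ h⟩
  choose pun hpun using hpun
  exact ⟨pun, fun y hy C hC τ ζ => hpun y C τ ζ hy hC⟩

end Deviations

section PunishmentPlan

variable [Fintype N] (pun : RPath Z → Finset N → ℕ → Profile Z → RPath Z)

open scoped Classical in
/-- The plan is an automaton whose state `(y, k)` means that period `k` of the path `y` is due. -/
noncomputable def punStep (s : RPath Z × ℕ) (a : Profile Z) : RPath Z × ℕ :=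
  if a = s.1 s.2 then (s.1, s.2 + 1) else (pun s.1 (deviators (s.1 s.2) a) s.2 a, 0)

noncomputable def punState (x : RPath Z) (h : Hist Z) : RPath Z × ℕ :=
  h.foldl (punStep pun) (x, 0)

noncomputable def punPlan (x : RPath Z) (h : Hist Z) : Profile Z :=
  (punState pun x h).1 (punState pun x h).2

variable {pun} {x : RPath Z}

lemma punStep_of_eq {y : RPath Z} {k : ℕ} {a : Profile Z} (h : a = y k) :
    punStep pun (y, k) a = (y, k + 1) := by
  simp [punStep, h]

lemma punStep_of_ne {y : RPath Z} {k : ℕ} {a : Profile Z} (h : a ≠ y k) :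
    punStep pun (y, k) a = (pun y (deviators (y k) a) k a, 0) := by
  simp [punStep, h]

lemma punState_append_singleton (h : Hist Z) (a : Profile Z) :
    punState pun x (h ++ [a]) = punStep pun (punState pun x h) a := by
  simp [punState]

lemma punState_planHist (h : Hist Z) (n : ℕ) :
    punState pun x (planHist (punPlan pun x) h n) =
      ((punState pun x h).1, (punState pun x h).2 + n) := by
  induction n with
  | zero => rfl
  | succ n ih =>
    rw [planHist, punState_append_singleton, ih, punStep_of_eq (by rw [punPlan, ih])]
    rfl

lemma planPath_punPlan (h : Hist Z) :
    planPath (punPlan pun x) h = fun n => (punState pun x h).1 ((punState pun x h).2 + n) := by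
  funext n
  rw [planPath, punPlan, punState_planHist]

lemma planPath_punPlan_nil : planPath (punPlan pun x) [] = x := by
  simp [planPath_punPlan, punState]

variable [DecidableEq N] {u : N → Profile Z → ℝ} {δ : ℝ} {Y : Set (RPath Z)}

lemma punState_fst_mem (hpun : IsPunishmentRule u δ Y pun) (hx : x ∈ Y) (h : Hist Z) :
    (punState pun x h).1 ∈ Y := by
  suffices ∀ s : RPath Z × ℕ, s.1 ∈ Y → (h.foldl (punStep pun) s).1 ∈ Y from this _ hx
  induction h with
  | nil => exact fun s hs => hs
  | cons a h ih =>
    rintro ⟨y, k⟩ hy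
    refine ih _ ?_
    by_cases ha : a = y k
    · rwa [punStep_of_eq ha]
    · rw [punStep_of_ne ha]
      exact (hpun _ hy _ (deviators_nonempty ha) _ _).1

lemma punState_devHistory (h : Hist Z) (C : Finset N) (τ : ℕ) (ζ : Profile Z) :
    punState pun x (devHistory h (planPath (punPlan pun x) h) C τ ζ) =
      punStep pun ((punState pun x h).1, (punState pun x h).2 + τ)
        (devProfile (planPath (punPlan pun x) h) C τ ζ) := by
  rw [devHistory_planPath, punState_append_singleton, punState_planHist]

theorem isPCE_punPlan (hu : ∀ i, ∃ M, ∀ p, |u i p| ≤ M) (hδ0 : 0 < δ) (hδ1 : δ < 1)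
    (hpun : IsPunishmentRule u δ Y pun) (hx : x ∈ Y) : IsPCE u δ (punPlan pun x) := by
  intro h C hC τ ζ
  have hdev := punState_devHistory (pun := pun) (x := x) h C τ ζ
  have hy := punState_fst_mem hpun hx h
  simp only [ge_iff_le]
  rw [planPath_punPlan (devHistory _ _ _ _ _), hdev, planPath_punPlan h]
  generalize punState pun x h = s at hy
  obtain ⟨y, k⟩ := s
  set a := devProfile (fun n => y (k + n)) C τ ζ
  by_cases ha : a = y (k + τ)
  · obtain ⟨i, hi⟩ := hC
    refine ⟨i, hi, le_of_eq (congrArg _ (splice_eq_self_of_devProfile_eq ha fun n => ?_))⟩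
    rw [punStep_of_eq ha]
    ring_nf
  · obtain ⟨-, i, hiD, hi⟩ := hpun y hy _ (deviators_nonempty ha) (k + τ) a
    obtain ⟨M, hM⟩ := hu i
    refine ⟨i, deviators_devProfile_subset (fun n => y (k + n)) C τ ζ hiD, ?_⟩
    simp only [punStep_of_ne ha, zero_add]
    refine disc_le_disc_of_common_prefix u hδ0 hδ1 hM k (fun t ht => ?_) (fun _ => rfl)
      (splice_add_of_devProfile_eq (devProfile_deviators y (k + τ) a)) hi
    simp [splice, show t < k + τ by omega]

end PunishmentPlan

end SelfGeneration

theorem self_generation_subset_PCEP_general {N : Type*} [Fintype N] [DecidableEq N] {Z : N → Type*}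
    [∀ i, MetricSpace (Z i)] [∀ i, CompactSpace (Z i)]
    (u : N → Profile Z → ℝ) (δ : ℝ)
    (hu : ∀ i, Continuous (u i)) (hδ0 : 0 < δ) (hδ1 : δ < 1)
    {Y : Set (RPath Z)} (hself : Y ⊆ Psi u δ Y) :
    Y ⊆ PCEP u δ := by
  intro x hx
  obtain ⟨pun, hpun⟩ := exists_isPunishmentRule hself
  have hbdd (i : N) : ∃ M, ∀ p, |u i p| ≤ M := by
    obtain ⟨M, hM⟩ := (isCompact_range (hu i)).isBounded.exists_norm_le
    exact ⟨M, fun p => hM _ ⟨p, rfl⟩⟩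
  exact ⟨punPlan pun x, isPCE_punPlan hbdd hδ0 hδ1 hpun hx, planPath_punPlan_nil⟩

theorem self_generation_subset_PCEP {N : Type*} [Fintype N] [DecidableEq N] {Z : N → Type*}
    [∀ i, MetricSpace (Z i)] [∀ i, CompactSpace (Z i)] [∀ i, Nonempty (Z i)]
    (u : N → Profile Z → ℝ) (δ : ℝ)
    (hu : ∀ i, Continuous (u i)) (hδ0 : 0 < δ) (hδ1 : δ < 1)
    {Y : Set (RPath Z)} (hself : Y ⊆ Psi u δ Y) :
    Y ⊆ PCEP u δ :=
  self_generation_subset_PCEP_general u δ hu hδ0 hδ1 hself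
end

section
/- The set PCEP of Perfect Coalitional Equilibrium paths satisfies PCEP ⊆ Ψ(PCEP), i.e., PCEP is self-generating. -/
open Set

/-! Every deviation from a PCE path is deterred by the plan itself, and the punishment it
prescribes (its continuation after the deviation) is again a PCE path. -/

section Continuation

variable {N : Type*} {Z : N → Type*}

def continuationPlan (f : Hist Z → Profile Z) (H : Hist Z) : Hist Z → Profile Z :=
  fun h => f (H ++ h)

theorem planHist_append (f : Hist Z → Profile Z) (H h : Hist Z) (n : ℕ) :
    planHist f (H ++ h) n = H ++ planHist (continuationPlan f H) h n := by
  induction n with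
  | zero => rfl
  | succ n ih => simp only [planHist, ih, continuationPlan, List.append_assoc]

theorem planPath_continuationPlan (f : Hist Z → Profile Z) (H h : Hist Z) :
    planPath (continuationPlan f H) h = planPath f (H ++ h) := by
  funext n
  simp only [planPath, planHist_append, continuationPlan]

theorem devHistory_append [DecidableEq N] (H h : Hist Z) (x : RPath Z) (C : Finset N)
    (τ : ℕ) (ζ : Profile Z) : devHistory (H ++ h) x C τ ζ = H ++ devHistory h x C τ ζ := by
  simp only [devHistory, List.append_assoc]

theorem IsPCE.continuation [DecidableEq N] {u : N → Profile Z → ℝ} {δ : ℝ}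
    {f : Hist Z → Profile Z} (hf : IsPCE u δ f) (H : Hist Z) :
    IsPCE u δ (continuationPlan f H) := by
  intro h C hC τ ζ
  simpa only [planPath_continuationPlan, ← devHistory_append] using hf (H ++ h) C hC τ ζ

theorem IsPCE.planPath_mem_PCEP [DecidableEq N] {u : N → Profile Z → ℝ} {δ : ℝ}
    {f : Hist Z → Profile Z} (hf : IsPCE u δ f) (H : Hist Z) :
    planPath f H ∈ PCEP u δ :=
  ⟨continuationPlan f H, hf.continuation H, by rw [planPath_continuationPlan, List.append_nil]⟩

end Continuation

theorem PCEP_self_generating_general {N : Type*} [DecidableEq N] {Z : N → Type*}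
    (u : N → Profile Z → ℝ) (δ : ℝ) :
    PCEP u δ ⊆ Psi u δ (PCEP u δ) := by
  rintro _ ⟨f, hf, rfl⟩ C hC τ ζ
  obtain ⟨i, hi, hdeterred⟩ := hf [] C hC τ ζ
  exact ⟨fun _ => planPath f (devHistory [] (planPath f []) C τ ζ),
    fun _ => hf.planPath_mem_PCEP _, i, hi, hdeterred⟩

theorem PCEP_self_generating {N : Type*} [Fintype N] [DecidableEq N] {Z : N → Type*}
    [∀ i, MetricSpace (Z i)] [∀ i, CompactSpace (Z i)] [∀ i, Nonempty (Z i)]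
    (u : N → Profile Z → ℝ) (δ : ℝ)
    (hu : ∀ i, Continuous (u i)) (hδ0 : 0 < δ) (hδ1 : δ < 1) :
    PCEP u δ ⊆ Psi u δ (PCEP u δ) :=
  PCEP_self_generating_general u δ
end
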